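/- Let G₁ : S ⥤ V₁ and G₂ : V₁ ⥤ V₂ be functors each admitting an asymmetric lens structure: there exist categories Λ₁, Λ₂, discrete opfibrations F₁ : Λ₁ ⥤ V₁, F₂ : Λ₂ ⥤ V₂ and bijective-on-objects functors P₁ : Λ₁ ⥤ S, P₂ : Λ₂ ⥤ V₁ with P₁ ⋙ G₁ = F₁ and P₂ ⋙ G₂ = F₂. Then the composite functor G₁ ⋙ G₂ : S ⥤ V₂ admits an asymmetric lens structure: there exist a category Λ, a discrete opfibration F : Λ ⥤ V₂ and a bijective-on-objects functor P : Λ ⥤ S with P ⋙ (G₁ ⋙ G₂) = F. -/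

import Mathlib

open CategoryTheory

/-- A functor `F : C ⥤ D` is a discrete opfibration if for every object `c` of `C` and
every morphism `g : F.obj c ⟶ d` in `D`, there is a unique pair of an object `c'` and a
morphism `f : c ⟶ c'` with `F.obj c' = d` and `F.map f ≫ eqToHom _ = g`. -/
def IsDiscreteOpfib {C : Type*} [Category C] {D : Type*} [Category D] (F : C ⥤ D) : Prop :=
  ∀ (c : C) ⦃d : D⦄ (g : F.obj c ⟶ d),
    ∃! p : (c' : C) × (c ⟶ c'), ∃ h : F.obj p.1 = d, F.map p.2 ≫ eqToHom h = g

/-- An asymmetric lens structure on a functor `G : S ⥤ V` (in `Cat`): a category `Λ`,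
a discrete opfibration `F : Λ ⥤ V` and a bijective-on-objects functor `P : Λ ⥤ S`
(the Put) such that `P ⋙ G = F`. -/
def HasLensStructure {S V : Cat} (G : S ⟶ V) : Prop :=
  ∃ (Λ : Cat) (F : Λ ⟶ V) (P : Λ ⟶ S),
    IsDiscreteOpfib F.toFunctor ∧ Function.Bijective P.toFunctor.obj ∧ P ≫ G = F

/-! The composite lens has as its category of lifts the strict pullback of `P₂` along `F₁`.
Its projection to `Λ₂` is a discrete opfibration because `F₁` is one, and its projection to
`Λ₁` is bijective on objects because `P₂` is. Discrete opfibrations compose, being exactly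
the functors that are bijective on costars `Σ c', c ⟶ c'`. -/

namespace CategoryTheory

section Costar

variable {C : Type*} [Category C] {D : Type*} [Category D] {E : Type*} [Category E]

theorem sigma_hom_eq_iff {c : C} {p q : Σ c', c ⟶ c'} :
    p = q ↔ ∃ h : p.1 = q.1, p.2 ≫ eqToHom h = q.2 := by
  constructor
  · rintro rfl
    exact ⟨rfl, Category.comp_id _⟩
  · obtain ⟨a, f⟩ := p
    obtain ⟨b, g⟩ := q
    rintro ⟨h, hg⟩
    dsimp only at h hg
    subst h
    rw [← hg, eqToHom_refl, Category.comp_id]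

def Functor.costarMap (F : C ⥤ D) (c : C) : (Σ c', c ⟶ c') → Σ d, F.obj c ⟶ d :=
  fun p => ⟨F.obj p.1, F.map p.2⟩

theorem isDiscreteOpfib_iff_bijective_costarMap (F : C ⥤ D) :
    IsDiscreteOpfib F ↔ ∀ c, Function.Bijective (F.costarMap c) := by
  simp only [IsDiscreteOpfib, Function.bijective_iff_existsUnique, Sigma.forall, Functor.costarMap,
    sigma_hom_eq_iff]

theorem _root_.IsDiscreteOpfib.comp {F : C ⥤ D} {G : D ⥤ E} (hF : IsDiscreteOpfib F)
    (hG : IsDiscreteOpfib G) : IsDiscreteOpfib (F ⋙ G) := by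
  rw [isDiscreteOpfib_iff_bijective_costarMap] at *
  exact fun c => (hG (F.obj c)).comp (hF c)

end Costar

section StrictPullback

variable {A : Type*} [Category A] {B : Type*} [Category B] {C : Type*} [Category C]

structure StrictPullback (F : A ⥤ C) (G : B ⥤ C) where
  fst : A
  snd : B
  w : F.obj fst = G.obj snd

namespace StrictPullback

variable {F : A ⥤ C} {G : B ⥤ C}

structure Hom (x y : StrictPullback F G) where
  fst : x.fst ⟶ y.fst
  snd : x.snd ⟶ y.snd
  w : F.map fst ≫ eqToHom y.w = eqToHom x.w ≫ G.map snd

instance : Category (StrictPullback F G) where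
  Hom := Hom
  id x := ⟨𝟙 x.fst, 𝟙 x.snd, by simp⟩
  comp f g := ⟨f.fst ≫ g.fst, f.snd ≫ g.snd, by
    rw [F.map_comp, G.map_comp, Category.assoc, g.w, reassoc_of% f.w]⟩

variable (F G) in
@[simps]
def fstFunctor : StrictPullback F G ⥤ A where
  obj := fst
  map := Hom.fst

variable (F G) in
@[simps]
def sndFunctor : StrictPullback F G ⥤ B where
  obj := snd
  map := Hom.snd

variable (F G) in
theorem condition : fstFunctor F G ⋙ F = sndFunctor F G ⋙ G :=
  Functor.ext (fun x => x.w) fun x y f => by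
    change F.map f.fst = eqToHom x.w ≫ G.map f.snd ≫ eqToHom y.w.symm
    rw [← reassoc_of% f.w, eqToHom_trans, eqToHom_refl, Category.comp_id]

theorem injective_fstFunctor_obj (hG : Function.Injective G.obj) :
    Function.Injective (fstFunctor F G).obj := by
  rintro ⟨a, b, w⟩ ⟨a', b', w'⟩ (rfl : a = a')
  obtain rfl : b = b' := hG (w.symm.trans w')
  rfl

theorem surjective_fstFunctor_obj (hG : Function.Surjective G.obj) :
    Function.Surjective (fstFunctor F G).obj :=
  fun a => ⟨⟨a, Function.surjInv hG (F.obj a), (Function.surjInv_eq hG _).symm⟩, rfl⟩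

theorem isDiscreteOpfib_sndFunctor (hF : IsDiscreteOpfib F) :
    IsDiscreteOpfib (sndFunctor F G) := by
  intro x b' k
  -- the lift of `k` pairs `k` with the `F`-lift of its image under `G`
  obtain ⟨⟨a', f⟩, ⟨ha, hf⟩, huniq⟩ := hF x.fst (eqToHom x.w ≫ G.map k)
  refine ⟨⟨⟨a', b', ha⟩, ⟨f, k, hf⟩⟩, ⟨rfl, Category.comp_id k⟩, ?_⟩
  rintro ⟨⟨a'', b'', w''⟩, ⟨f'', k'', hw⟩⟩ ⟨hb, hk⟩
  dsimp only at hb hk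
  subst hb
  rw [eqToHom_refl, Category.comp_id] at hk
  subst hk
  obtain ⟨ha', hf'⟩ := sigma_hom_eq_iff.mp (huniq ⟨a'', f''⟩ ⟨w'', hw⟩)
  dsimp only at ha' hf'
  subst ha'
  obtain rfl : f'' = f := by simpa using hf'
  rfl

end StrictPullback

end StrictPullback

end CategoryTheory

/-- Asymmetric lenses compose: the Gets compose, and the composite Get again carries a
lens structure (obtained by pulling back the second Put along the first lens's discrete
opfibration). -/
theorem lens_comp {S V₁ V₂ : Cat} (G₁ : S ⟶ V₁) (G₂ : V₁ ⟶ V₂)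
    (h₁ : HasLensStructure G₁) (h₂ : HasLensStructure G₂) :
    HasLensStructure (G₁ ≫ G₂) := by
  obtain ⟨Λ₁, F₁, P₁, hF₁, hP₁, rfl⟩ := h₁
  obtain ⟨Λ₂, F₂, P₂, hF₂, hP₂, rfl⟩ := h₂
  let Λ := StrictPullback (P₁ ≫ G₁).toFunctor P₂.toFunctor
  refine ⟨Cat.of Λ, (StrictPullback.sndFunctor _ _ ⋙ (P₂ ≫ G₂).toFunctor).toCatHom,
    (StrictPullback.fstFunctor _ _ ⋙ P₁.toFunctor).toCatHom,
    (StrictPullback.isDiscreteOpfib_sndFunctor hF₁).comp hF₂,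
    hP₁.comp ⟨StrictPullback.injective_fstFunctor_obj hP₂.1,
      StrictPullback.surjective_fstFunctor_obj hP₂.2⟩, Cat.Hom.ext ?_⟩
  exact congrArg (· ⋙ G₂.toFunctor) (StrictPullback.condition _ _)
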